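/- Let g̃ be a finite-dimensional simple Lie algebra over ℂ and let a, b ∈ g̃ be such that for every k ≥ 0 and all x₁, …, x_k ∈ g̃ one has ad(a)∘ad(x₁)∘⋯∘ad(x_k)∘ad(b) = ad(b)∘ad(x₁)∘⋯∘ad(x_k)∘ad(a) as endomorphisms of g̃ (for k = 0 this reads ad(a)∘ad(b) = ad(b)∘ad(a)). Then a and b are linearly dependent over ℂ. -/

import Mathlib

/-!
Since `g` is simple, `g` is an irreducible module over the associative algebra generated by
`ad g`, so by Burnside's theorem this algebra is all of `End g`. The hypothesis, being linear in
the middle factor, then gives `ad a ∘ X ∘ ad b = ad b ∘ X ∘ ad a` for every endomorphism `X`;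
testing this on rank-one maps `X = φ(·) v` shows `ad a ∈ ℂ ∙ ad b`, and `ad` is injective.
-/

-- Burnside's theorem via Jacobson density: by Schur's lemma `End_A V = K`, so every `K`-linear
-- map of `V` is `End_A V`-linear, hence agrees with an element of `A` on a finite spanning set.
theorem Subalgebra.eq_top_of_isSimpleModule {K V : Type*} [Field K] [IsAlgClosed K]
    [AddCommGroup V] [Module K V] [FiniteDimensional K V]
    (A : Subalgebra K (Module.End K V)) [IsSimpleModule A V] : A = ⊤ := by
  refine eq_top_iff.2 fun f _ => ?_
  let f' : Module.End (Module.End A V) V :=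
    { toFun := f
      map_add' := f.map_add
      map_smul' := fun φ v => by
        obtain ⟨c, rfl⟩ := (IsSimpleModule.algebraMap_end_bijective_of_isAlgClosed K).2 φ
        simp }
  obtain ⟨s, hs⟩ := Module.Finite.fg_top (R := K) (M := V)
  obtain ⟨r, hr⟩ := jacobson_density f' s
  have hfr : f = r := LinearMap.ext_on hs fun m hm => hr m hm
  exact hfr ▸ r.2

open LieModule in
theorem LieModule.isSimpleModule_adjoin_range_toEnd {R L M : Type*} [CommRing R] [LieRing L]
    [LieAlgebra R L] [AddCommGroup M] [Module R M] [LieRingModule L M] [LieModule R L M]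
    [IsIrreducible R L M] : IsSimpleModule (Algebra.adjoin R (Set.range (toEnd R L M))) M := by
  have : Nontrivial M := nontrivial_of_isIrreducible R L M
  have : Nontrivial (Submodule (Algebra.adjoin R (Set.range (toEnd R L M))) M) :=
    (Submodule.nontrivial_iff _).2 this
  refine (isSimpleModule_iff _ _).2 ⟨fun N => ?_⟩
  let N' : LieSubmodule R L M :=
    { N.restrictScalars R with
      lie_mem := fun {x m} hm =>
        N.smul_mem ⟨toEnd R L M x, Algebra.subset_adjoin ⟨x, rfl⟩⟩ hm }
  rcases eq_bot_or_eq_top N' with h | h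
  · exact .inl <| (Submodule.restrictScalars_eq_bot_iff R _ M).1 <|
      (LieSubmodule.toSubmodule_eq_bot N').2 h
  · exact .inr <| (Submodule.restrictScalars_eq_top_iff R _ M).1 <|
      (LieSubmodule.toSubmodule_eq_top N').2 h

theorem mul_mul_comm_of_mem_adjoin_range {R A ι : Type*} [CommSemiring R] [Semiring A]
    [Algebra R A] {f : ι → A} {p q : A}
    (h : ∀ l : List ι, p * (l.map f).prod * q = q * (l.map f).prod * p) {u : A}
    (hu : u ∈ Algebra.adjoin R (Set.range f)) : p * u * q = q * u * p := by
  rw [← Subalgebra.mem_toSubmodule, Algebra.adjoin_eq_span] at hu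
  induction hu using Submodule.span_induction with
  | mem x hx =>
    rw [SetLike.mem_coe, ← FreeMonoid.mrange_lift] at hx
    obtain ⟨l, rfl⟩ := hx
    simpa [FreeMonoid.lift_apply] using h l.toList
  | zero => simp
  | add x y _ _ hx hy => simp only [mul_add, add_mul, hx, hy]
  | smul c x _ hx => simp only [mul_smul_comm, smul_mul_assoc, hx]

theorem Module.End.exists_eq_smul_of_forall_mul_mul_comm {K V : Type*} [Field K]
    [AddCommGroup V] [Module K V] {A B : Module.End K V} (hB : B ≠ 0)
    (h : ∀ X : Module.End K V, A * X * B = B * X * A) : ∃ c : K, A = c • B := by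
  obtain ⟨y, hy⟩ : ∃ y, B y ≠ 0 := by
    by_contra! hB'
    exact hB (LinearMap.ext hB')
  obtain ⟨φ, hφ⟩ := Module.Projective.exists_dual_eq_one K hy
  refine ⟨φ (A y), LinearMap.ext fun v => ?_⟩
  simpa [hφ] using congr($(h (φ.smulRight v)) y)

theorem Module.End.not_linearIndependent_of_forall_mul_mul_comm {K V : Type*} [Field K]
    [AddCommGroup V] [Module K V] {A B : Module.End K V}
    (h : ∀ X : Module.End K V, A * X * B = B * X * A) : ¬ LinearIndependent K ![A, B] := by
  intro hli
  obtain ⟨c, rfl⟩ := exists_eq_smul_of_forall_mul_mul_comm (by simpa using hli.ne_zero 1) h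
  exact one_ne_zero (LinearIndependent.pair_iff.1 hli 1 (-c) (by simp)).1

/-- **Statement 17.** In a finite-dimensional simple complex Lie algebra, if
`ad a ∘ ad x₁ ∘ ⋯ ∘ ad x_k ∘ ad b = ad b ∘ ad x₁ ∘ ⋯ ∘ ad x_k ∘ ad a` for all
`k ≥ 0` and all `x₁, …, x_k` (the case `k = 0` being `ad a ∘ ad b = ad b ∘ ad a`),
then `a` and `b` are linearly dependent over `ℂ`. -/
theorem ad_intertwining_implies_linearly_dependent
    (g : Type) [LieRing g] [LieAlgebra ℂ g] [Module.Finite ℂ g] [LieAlgebra.IsSimple ℂ g]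
    (a b : g)
    (h : ∀ l : List g,
      LieAlgebra.ad ℂ g a * (l.map fun x => LieAlgebra.ad ℂ g x).prod * LieAlgebra.ad ℂ g b =
      LieAlgebra.ad ℂ g b * (l.map fun x => LieAlgebra.ad ℂ g x).prod * LieAlgebra.ad ℂ g a) :
    ¬ LinearIndependent ℂ ![a, b] := by
  intro hli
  have : IsSimpleModule (Algebra.adjoin ℂ (Set.range (LieAlgebra.ad ℂ g))) g :=
    LieModule.isSimpleModule_adjoin_range_toEnd
  have hadjoin_eq_top := Subalgebra.eq_top_of_isSimpleModule
    (Algebra.adjoin ℂ (Set.range (LieAlgebra.ad ℂ g)))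
  have hcomm (X : Module.End ℂ g) :
      LieAlgebra.ad ℂ g a * X * LieAlgebra.ad ℂ g b =
        LieAlgebra.ad ℂ g b * X * LieAlgebra.ad ℂ g a :=
    mul_mul_comm_of_mem_adjoin_range h (hadjoin_eq_top ▸ Algebra.mem_top)
  refine Module.End.not_linearIndependent_of_forall_mul_mul_comm hcomm ?_
  have hker : LinearMap.ker (LieAlgebra.ad ℂ g : g →ₗ[ℂ] Module.End ℂ g) = ⊥ :=
    LinearMap.ker_eq_bot.2 LieModule.IsFaithful.injective_toEnd
  have hli_ad := hli.map' _ hker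
  rwa [← FinVec.map_eq] at hli_ad
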